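/- arXiv:2202.06231 — 2 statements merged into one kernel-verified Lean document; each statement's English description precedes it below -/
import Mathlib

section
/- For α, β, Ω > 0 and any real s with s > max(-α, -β), a Gamma-Gamma random variable X with parameters (α, β, Ω) satisfies E[X^s] = (Ω/(αβ))^s · Γ(α+s)Γ(β+s)/(Γ(α)Γ(β)). In particular E[X] = Ω. -/
open MeasureTheory ProbabilityTheory Real Set

/-- The modified Bessel function of the second kind `K_ν(x)`, via its
integral representation (valid for `x > 0`). -/
noncomputable def besselK (ν x : ℝ) : ℝ :=
  ∫ t in Set.Ioi (0:ℝ), Real.exp (-x * Real.cosh t) * Real.cosh (ν * t)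

/-!
With `c = αβ/Ω`, the substitution `v = √(cx) eᵗ` in the `cosh`-integral for `K_{α-β}`
writes the density as a Gamma mixture,
`f(x) = c^β / (Γ(α)Γ(β)) · x^(β-1) ∫₀^∞ v^(α-β-1) e^(-v-cx/v) dv`,
so `X` has the law of a product of independent Gamma variables. Against `x^s`, Tonelli lets the
`x`-integral be done first: it is the Gamma integral `Γ(β+s) (v/c)^(β+s)`, and what remains is
`c^(-(β+s)) Γ(β+s) Γ(α+s)`.
-/

lemma one_add_sq_div_two_le_cosh (t : ℝ) : 1 + t ^ 2 / 2 ≤ cosh t := by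
  have h := sum_le_hasSum (Finset.range 2)
    (fun n _ => div_nonneg ((even_two_mul n).pow_nonneg t) (Nat.cast_nonneg _)) (hasSum_cosh t)
  simpa [Finset.sum_range_succ] using h

lemma integrable_exp_neg_mul_cosh_add_mul (ν : ℝ) {x : ℝ} (hx : 0 < x) :
    Integrable fun t : ℝ => exp (-x * cosh t + ν * t) := by
  have hgauss : Integrable fun t : ℝ =>
      exp (-x + ν ^ 2 / (2 * x)) * exp (-(x / 2) * (t - ν / x) ^ 2) :=
    ((integrable_exp_neg_mul_sq (half_pos hx)).comp_sub_right (ν / x)).const_mul _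
  refine hgauss.mono' (by fun_prop) (ae_of_all _ fun t => ?_)
  rw [norm_of_nonneg (exp_pos _).le, ← exp_add, exp_le_exp]
  have := mul_le_mul_of_nonneg_left (one_add_sq_div_two_le_cosh t) hx.le
  calc -x * cosh t + ν * t ≤ -x * (1 + t ^ 2 / 2) + ν * t := by linarith
    _ = _ := by field_simp; ring

lemma besselK_eq_half_integral (ν : ℝ) {x : ℝ} (hx : 0 < x) :
    besselK ν x = (1 / 2) * ∫ t, exp (-x * cosh t + ν * t) := by
  have hsymm : ∫ t, exp (-x * cosh t + -ν * t) = ∫ t, exp (-x * cosh t + ν * t) := by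
    rw [← integral_neg_eq_self]
    simp only [cosh_neg, neg_mul_neg]
  have heven : ∫ t, exp (-x * cosh |t|) * cosh (ν * |t|) = 2 * besselK ν x :=
    integral_comp_abs (f := fun t => exp (-x * cosh t) * cosh (ν * t))
  have hsplit : ∀ t, exp (-x * cosh |t|) * cosh (ν * |t|) =
      (exp (-x * cosh t + ν * t) + exp (-x * cosh t + -ν * t)) / 2 := by
    intro t
    have hν : cosh (ν * |t|) = cosh (ν * t) := by
      rw [← cosh_abs, abs_mul, abs_abs, ← abs_mul, cosh_abs]
    rw [cosh_abs, hν, cosh_eq (ν * t), exp_add, exp_add, neg_mul ν, exp_neg]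
    ring
  simp_rw [hsplit] at heven
  rw [integral_div, integral_add (integrable_exp_neg_mul_cosh_add_mul ν hx)
    (integrable_exp_neg_mul_cosh_add_mul (-ν) hx), hsymm] at heven
  linarith

lemma integral_Ioi_zero_eq_integral_exp_smul {E : Type*} [NormedAddCommGroup E]
    [NormedSpace ℝ E] (g : ℝ → E) : ∫ u in Ioi 0, g u = ∫ t, exp t • g (exp t) := by
  have h := integral_image_eq_integral_abs_deriv_smul MeasurableSet.univ
    (fun t _ => (hasDerivAt_exp t).hasDerivWithinAt) exp_injective.injOn g
  simpa [range_exp, abs_of_pos (exp_pos _)] using h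

lemma besselK_eq_half_integral_Ioi (ν : ℝ) {x : ℝ} (hx : 0 < x) :
    besselK ν x = (1 / 2) * ∫ u in Ioi 0, u ^ (ν - 1) * exp (-(x / 2) * (u + u⁻¹)) := by
  rw [besselK_eq_half_integral ν hx, integral_Ioi_zero_eq_integral_exp_smul]
  congr 1
  refine integral_congr_ae (ae_of_all _ fun t => ?_)
  dsimp only
  rw [smul_eq_mul, rpow_def_of_pos (exp_pos t), log_exp, ← exp_neg, cosh_eq, ← exp_add,
    ← exp_add]
  ring_nf

lemma integral_rpow_mul_exp_neg_sub_div (ν : ℝ) {z : ℝ} (hz : 0 < z) :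
    ∫ v in Ioi 0, v ^ (ν - 1) * exp (-v - z / v) = 2 * z ^ (ν / 2) * besselK ν (2 * √z) := by
  have hr : 0 < √z := sqrt_pos.2 hz
  have hscale := integral_comp_mul_left_Ioi (fun v => v ^ (ν - 1) * exp (-v - z / v)) 0 hr
  rw [mul_zero, smul_eq_mul, eq_inv_mul_iff_mul_eq₀ hr.ne'] at hscale
  have hintegrand : ∀ u ∈ Ioi (0 : ℝ),
      (√z * u) ^ (ν - 1) * exp (-(√z * u) - z / (√z * u)) =
        √z ^ (ν - 1) * (u ^ (ν - 1) * exp (-(2 * √z / 2) * (u + u⁻¹))) := by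
    intro u hu
    rw [mul_rpow hr.le (le_of_lt hu), div_mul_eq_div_div, div_sqrt]
    field_simp
    ring_nf
  rw [← hscale, setIntegral_congr_fun measurableSet_Ioi hintegrand, integral_const_mul,
    besselK_eq_half_integral_Ioi ν (by positivity)]
  have hpow : √z * √z ^ (ν - 1) = z ^ (ν / 2) := by
    rw [sqrt_eq_rpow, ← rpow_mul hz.le, ← rpow_add hz]
    ring_nf
  rw [← mul_assoc, hpow]
  ring

section MellinConvolution

variable {a b c : ℝ}

lemma rpow_mul_rpow_mul_exp_neg_sub_div (v x : ℝ) :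
    x ^ (b - 1) * (v ^ (a - b - 1) * exp (-v - c * x / v)) =
      v ^ (a - b - 1) * exp (-v) * (x ^ (b - 1) * exp (-(c / v * x))) := by
  rw [show -v - c * x / v = -v + -(c / v * x) by ring, exp_add]
  ring

lemma integrableOn_rpow_mul_rpow_mul_exp_neg_sub_div (hb : 0 < b) (hc : 0 < c) {v : ℝ}
    (hv : 0 < v) :
    IntegrableOn (fun x => x ^ (b - 1) * (v ^ (a - b - 1) * exp (-v - c * x / v))) (Ioi 0) := by
  simp_rw [rpow_mul_rpow_mul_exp_neg_sub_div v]
  have hgamma : IntegrableOn (fun x => x ^ (b - 1) * exp (-(c / v * x))) (Ioi 0) := by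
    simpa using integrableOn_rpow_mul_exp_neg_mul_rpow (p := 1) (by linarith) one_pos
      (div_pos hc hv)
  exact hgamma.const_mul _

lemma integral_rpow_mul_rpow_mul_exp_neg_sub_div (hb : 0 < b) (hc : 0 < c) {v : ℝ}
    (hv : 0 < v) :
    ∫ x in Ioi 0, x ^ (b - 1) * (v ^ (a - b - 1) * exp (-v - c * x / v)) =
      Gamma b * c ^ (-b) * (v ^ (a - 1) * exp (-v)) := by
  simp_rw [rpow_mul_rpow_mul_exp_neg_sub_div v]
  rw [integral_const_mul, integral_rpow_mul_exp_neg_mul_Ioi hb (div_pos hc hv), one_div, inv_div,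
    div_rpow hv.le hc.le, rpow_neg hc.le, div_eq_mul_inv, show a - 1 = a - b - 1 + b by ring,
    rpow_add hv]
  ring

lemma integral_rpow_mul_integral_rpow_mul_exp_neg_sub_div (ha : 0 < a) (hb : 0 < b)
    (hc : 0 < c) :
    ∫ x in Ioi 0, x ^ (b - 1) * ∫ v in Ioi 0, v ^ (a - b - 1) * exp (-v - c * x / v) =
      Gamma a * Gamma b * c ^ (-b) := by
  set F : ℝ → ℝ → ℝ := fun x v => x ^ (b - 1) * (v ^ (a - b - 1) * exp (-v - c * x / v))
  have hF : Integrable (Function.uncurry F)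
      ((volume.restrict (Ioi 0)).prod (volume.restrict (Ioi 0))) := by
    refine (integrable_prod_iff' (by unfold F; fun_prop)).2 ⟨?_, ?_⟩
    · filter_upwards [ae_restrict_mem measurableSet_Ioi] with v hv
      exact integrableOn_rpow_mul_rpow_mul_exp_neg_sub_div hb hc hv
    · have hgamma := (GammaIntegral_convergent ha).const_mul (Gamma b * c ^ (-b))
      refine Integrable.congr hgamma ?_
      filter_upwards [ae_restrict_mem measurableSet_Ioi] with v (hv : 0 < v)
      have hnorm : ∀ x ∈ Ioi (0 : ℝ), ‖F x v‖ = F x v := fun x (hx : 0 < x) =>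
        norm_of_nonneg (by positivity)
      change _ = ∫ x in Ioi 0, ‖F x v‖
      rw [setIntegral_congr_fun measurableSet_Ioi hnorm,
        integral_rpow_mul_rpow_mul_exp_neg_sub_div hb hc hv]
      ring
  calc ∫ x in Ioi 0, x ^ (b - 1) * ∫ v in Ioi 0, v ^ (a - b - 1) * exp (-v - c * x / v)
      = ∫ x in Ioi 0, ∫ v in Ioi 0, F x v := by simp_rw [F, integral_const_mul]
    _ = ∫ v in Ioi 0, ∫ x in Ioi 0, F x v := integral_integral_swap hF
    _ = ∫ v in Ioi 0, Gamma b * c ^ (-b) * (v ^ (a - 1) * exp (-v)) :=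
        setIntegral_congr_fun measurableSet_Ioi fun v hv =>
          integral_rpow_mul_rpow_mul_exp_neg_sub_div hb hc hv
    _ = Gamma a * Gamma b * c ^ (-b) := by
        rw [integral_const_mul, Gamma_eq_integral ha]
        simp_rw [mul_comm (exp _)]
        ring

end MellinConvolution

lemma besselK_nonneg (ν x : ℝ) : 0 ≤ besselK ν x :=
  setIntegral_nonneg measurableSet_Ioi fun _ _ => by positivity

lemma measurable_besselK (ν : ℝ) : Measurable (besselK ν) := by
  have hcont : Continuous fun p : ℝ × ℝ => exp (-p.1 * cosh p.2) * cosh (ν * p.2) := by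
    fun_prop
  exact hcont.stronglyMeasurable.integral_prod_right'.measurable

lemma integral_comp_eq_integral_mul_of_map_eq_withDensity {Ω : Type*} [MeasurableSpace Ω]
    {μ : Measure Ω} {X : Ω → ℝ} (hX : Measurable X) {f g : ℝ → ℝ} (hf : Measurable f)
    (hf_nonneg : ∀ x, 0 ≤ f x) (hg : Measurable g)
    (hmap : μ.map X = volume.withDensity fun x => ENNReal.ofReal (f x)) :
    ∫ ω, g (X ω) ∂μ = ∫ x, f x * g x := by
  rw [← integral_map hX.aemeasurable hg.aestronglyMeasurable, hmap,
    integral_withDensity_eq_integral_toReal_smul hf.ennreal_ofReal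
      (ae_of_all _ fun _ => ENNReal.ofReal_lt_top)]
  simp_rw [ENNReal.toReal_ofReal (hf_nonneg _), smul_eq_mul]

noncomputable def gammaGammaPDFReal (α β Ω x : ℝ) : ℝ :=
  if 0 < x then
    2 / (Gamma α * Gamma β) * (α * β / Ω) ^ ((α + β) / 2) *
      x ^ ((α + β) / 2 - 1) * besselK (α - β) (2 * √(α * β * x / Ω))
  else 0

section GammaGamma

variable {α β Ω : ℝ}

lemma gammaGammaPDFReal_nonneg (hα : 0 < α) (hβ : 0 < β) (hΩ : 0 < Ω) (x : ℝ) :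
    0 ≤ gammaGammaPDFReal α β Ω x := by
  unfold gammaGammaPDFReal
  split_ifs with hx
  · have := besselK_nonneg (α - β) (2 * √(α * β * x / Ω))
    have := Gamma_pos_of_pos hα
    have := Gamma_pos_of_pos hβ
    positivity
  · rfl

lemma measurable_gammaGammaPDFReal (α β Ω : ℝ) : Measurable (gammaGammaPDFReal α β Ω) := by
  unfold gammaGammaPDFReal
  refine Measurable.ite measurableSet_Ioi ?_ measurable_const
  exact (by fun_prop : Measurable _).mul ((measurable_besselK _).comp (by fun_prop))

lemma gammaGammaPDFReal_eq_integral (hα : 0 < α) (hβ : 0 < β) (hΩ : 0 < Ω) {x : ℝ}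
    (hx : 0 < x) :
    gammaGammaPDFReal α β Ω x = (α * β / Ω) ^ β / (Gamma α * Gamma β) *
      (x ^ (β - 1) * ∫ v in Ioi 0, v ^ (α - β - 1) * exp (-v - α * β / Ω * x / v)) := by
  set c := α * β / Ω
  have hc : 0 < c := by positivity
  rw [gammaGammaPDFReal, if_pos hx, integral_rpow_mul_exp_neg_sub_div _ (by positivity),
    mul_rpow hc.le hx.le, show α * β * x / Ω = c * x by ring,
    show (α + β) / 2 = β + (α - β) / 2 by ring,
    show β + (α - β) / 2 - 1 = β - 1 + (α - β) / 2 by ring,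
    rpow_add hc, rpow_add hx]
  ring

lemma integral_gammaGammaPDFReal_mul_rpow (hα : 0 < α) (hβ : 0 < β) (hΩ : 0 < Ω) {s : ℝ}
    (hs : max (-α) (-β) < s) :
    ∫ x, gammaGammaPDFReal α β Ω x * x ^ s =
      (Ω / (α * β)) ^ s * (Gamma (α + s) * Gamma (β + s) / (Gamma α * Gamma β)) := by
  obtain ⟨hαs, hβs⟩ : 0 < α + s ∧ 0 < β + s := by
    constructor <;> linarith [max_lt_iff.1 hs]
  set c := α * β / Ω
  have hc : 0 < c := by positivity
  have hmellin := integral_rpow_mul_integral_rpow_mul_exp_neg_sub_div hαs hβs hc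
  rw [show α + s - (β + s) - 1 = α - β - 1 by ring] at hmellin
  have hintegrand : ∀ x ∈ Ioi (0 : ℝ), gammaGammaPDFReal α β Ω x * x ^ s =
      c ^ β / (Gamma α * Gamma β) *
        (x ^ (β + s - 1) * ∫ v in Ioi 0, v ^ (α - β - 1) * exp (-v - c * x / v)) := by
    intro x (hx : 0 < x)
    rw [gammaGammaPDFReal_eq_integral hα hβ hΩ hx, show β + s - 1 = β - 1 + s by ring,
      rpow_add hx]
    ring
  rw [← setIntegral_eq_integral_of_forall_compl_eq_zero (s := Ioi 0) fun x hx => by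
      rw [gammaGammaPDFReal, if_neg (show ¬ 0 < x from hx), zero_mul],
    setIntegral_congr_fun measurableSet_Ioi hintegrand, integral_const_mul, hmellin,
    show Ω / (α * β) = c⁻¹ by rw [inv_div], inv_rpow hc.le, ← rpow_neg hc.le,
    show -s = β + -(β + s) by ring, rpow_add hc]
  ring

end GammaGamma

theorem gammaGamma_moments_general (α β Ωm s : ℝ)
    (hα : 0 < α) (hβ : 0 < β) (hΩ : 0 < Ωm) (hs : max (-α) (-β) < s)
    {E : Type*} [MeasureSpace E]
    (X : E → ℝ) (hXm : Measurable X)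
    (hmap : Measure.map X ℙ = volume.withDensity fun x =>
      ENNReal.ofReal (if 0 < x then
        2 / (Real.Gamma α * Real.Gamma β) * (α * β / Ωm) ^ ((α + β) / 2) *
          x ^ ((α + β) / 2 - 1) * besselK (α - β) (2 * Real.sqrt (α * β * x / Ωm))
        else 0)) :
    (∫ ω, X ω ^ s ∂ℙ =
        (Ωm / (α * β)) ^ s * (Real.Gamma (α + s) * Real.Gamma (β + s) /
          (Real.Gamma α * Real.Gamma β))) ∧
      ∫ ω, X ω ∂ℙ = Ωm := by
  have hmoment : ∀ t, max (-α) (-β) < t → ∫ ω, X ω ^ t ∂ℙ =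
      (Ωm / (α * β)) ^ t * (Gamma (α + t) * Gamma (β + t) / (Gamma α * Gamma β)) :=
    fun t ht => by
      rw [integral_comp_eq_integral_mul_of_map_eq_withDensity hXm
        (measurable_gammaGammaPDFReal α β Ωm) (gammaGammaPDFReal_nonneg hα hβ hΩ)
        (g := fun x => x ^ t) (measurable_id.pow_const t) hmap,
        integral_gammaGammaPDFReal_mul_rpow hα hβ hΩ ht]
  refine ⟨hmoment s hs, ?_⟩
  have hmean := hmoment 1 (max_lt (by linarith) (by linarith))
  simp only [rpow_one, Gamma_add_one hα.ne', Gamma_add_one hβ.ne'] at hmean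
  rw [hmean]
  have := (Gamma_pos_of_pos hα).ne'
  have := (Gamma_pos_of_pos hβ).ne'
  field_simp

theorem gammaGamma_moments (α β Ωm s : ℝ)
    (hα : 0 < α) (hβ : 0 < β) (hΩ : 0 < Ωm) (hs : max (-α) (-β) < s)
    {E : Type*} [MeasureSpace E] [IsProbabilityMeasure (ℙ : Measure E)]
    (X : E → ℝ) (hXm : Measurable X)
    (hmap : Measure.map X ℙ = volume.withDensity fun x =>
      ENNReal.ofReal (if 0 < x then
        2 / (Real.Gamma α * Real.Gamma β) * (α * β / Ωm) ^ ((α + β) / 2) *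
          x ^ ((α + β) / 2 - 1) * besselK (α - β) (2 * Real.sqrt (α * β * x / Ωm))
        else 0)) :
    (∫ ω, X ω ^ s ∂ℙ =
        (Ωm / (α * β)) ^ s * (Real.Gamma (α + s) * Real.Gamma (β + s) /
          (Real.Gamma α * Real.Gamma β))) ∧
      ∫ ω, X ω ∂ℙ = Ωm :=
  gammaGamma_moments_general α β Ωm s hα hβ hΩ hs X hXm hmap
end

section
/- If γ_th satisfies γ_th > 1/(κ_t² + κ_r²), equivalently if the spectral efficiency p = log₂(1 + γ_th) exceeds log₂(1 + 1/(κ_t² + κ_r²)), then for every realization a ≥ 0 of the squared channel gain, the SDNR aP/(a(κ_t²+κ_r²)P + N) is at most γ_th, so the outage probability equals 1. -/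
open MeasureTheory ProbabilityTheory

/-- SDNR at squared channel gain `a`; `κ` stands for the aggregate impairment `κt² + κr²`. -/
noncomputable def sdnr (κ P N a : ℝ) : ℝ := a * P / (a * κ * P + N)

/-- The distortion term grows with the signal, so no channel gain lifts the SDNR above `κ⁻¹`. -/
theorem sdnr_le_inv {κ P N a : ℝ} (hκ : 0 < κ) (hP : 0 ≤ P) (hN : 0 ≤ N) (ha : 0 ≤ a) :
    sdnr κ P N a ≤ κ⁻¹ := by
  refine div_le_of_le_mul₀ (by positivity) (by positivity) ?_
  calc a * P ≤ a * P + N / κ := le_add_of_nonneg_right (by positivity)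
    _ = κ⁻¹ * (a * κ * P + N) := by field_simp

theorem hardware_caps_spectral_efficiency_general (P N κt κr γth : ℝ)
    (hP : 0 < P) (hN : 0 < N) (hκr : 0 < κr)
    (hγ : 1 / (κt ^ 2 + κr ^ 2) < γth)
    {Ω : Type*} [MeasureSpace Ω] [IsProbabilityMeasure (ℙ : Measure Ω)]
    (A : Ω → ℝ) :
    (∀ a : ℝ, 0 ≤ a → a * P / (a * (κt ^ 2 + κr ^ 2) * P + N) ≤ γth) ∧
      ℙ {ω | (A ω) ^ 2 * P / ((A ω) ^ 2 * (κt ^ 2 + κr ^ 2) * P + N) ≤ γth} = 1 := by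
  have hκ : 0 < κt ^ 2 + κr ^ 2 := by positivity
  have hcap (a : ℝ) (ha : 0 ≤ a) : sdnr (κt ^ 2 + κr ^ 2) P N a ≤ γth :=
    (sdnr_le_inv hκ hP.le hN.le ha).trans (by simpa only [one_div] using hγ.le)
  refine ⟨hcap, ?_⟩
  convert measure_univ (μ := (ℙ : Measure Ω))
  exact Set.eq_univ_of_forall fun ω => hcap _ (sq_nonneg (A ω))

theorem hardware_caps_spectral_efficiency (P N κt κr γth : ℝ)
    (hP : 0 < P) (hN : 0 < N) (hκt : 0 < κt) (hκr : 0 < κr)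
    (hγ : 1 / (κt ^ 2 + κr ^ 2) < γth)
    {Ω : Type*} [MeasureSpace Ω] [IsProbabilityMeasure (ℙ : Measure Ω)]
    (A : Ω → ℝ) :
    (∀ a : ℝ, 0 ≤ a → a * P / (a * (κt ^ 2 + κr ^ 2) * P + N) ≤ γth) ∧
      ℙ {ω | (A ω) ^ 2 * P / ((A ω) ^ 2 * (κt ^ 2 + κr ^ 2) * P + N) ≤ γth} = 1 :=
  hardware_caps_spectral_efficiency_general P N κt κr γth hP hN hκr hγ A
end
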